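/- arXiv:1701.07620 — 2 statements merged into one kernel-verified Lean document; each statement's English description precedes it below -/
import Mathlib

section
/- For every integer n ≥ 0 and every real polynomial p of degree at most 2n+1, the Gauss–Chebyshev quadrature rule is exact: (π/(n+1)) · Σ_{j=0}^{n} p(cos((2j+1)π/(2(n+1)))) = ∫_{−1}^{1} p(x) · (1−x²)^{−1/2} dx. -/
open Real Finset

namespace Polynomial.Chebyshev

theorem intervalIntegral_div_sqrt_one_sub_sq (f : ℝ → ℝ) :
    ∫ x in (-1 : ℝ)..1, f x / √(1 - x ^ 2) = ∫ x, f x ∂measureT := by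
  simp_rw [integral_measureT, Real.sqrt_inv, div_eq_mul_inv]

end Polynomial.Chebyshev

/-- Gauss–Chebyshev quadrature with `n+1` nodes (the zeros of `T_{n+1}`) and
equal weights `π/(n+1)` is exact for every polynomial of degree at most
`2n+1` against the Chebyshev weight `(1−x²)^{−1/2}` on `[−1,1]`. -/
theorem gauss_chebyshev_exact (n : ℕ) (p : Polynomial ℝ)
    (hp : p.degree ≤ (2 * n + 1 : ℕ)) :
    (π / (n + 1)) *
        ∑ j ∈ range (n + 1),
          p.eval (Real.cos ((2 * (j : ℝ) + 1) * π / (2 * ((n : ℝ) + 1)))) =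
      ∫ x in (-1 : ℝ)..1, p.eval x / Real.sqrt (1 - x ^ 2) := by
  have hdeg : p.degree < 2 * (n + 1 : ℕ) :=
    hp.trans_lt (by exact_mod_cast (by omega : 2 * n + 1 < 2 * (n + 1)))
  rw [Polynomial.Chebyshev.intervalIntegral_div_sqrt_one_sub_sq,
    Polynomial.Chebyshev.integral_eq_sumZeroes n.succ_ne_zero hdeg, Polynomial.Chebyshev.sumZeroes]
  push_cast
  simp_rw [div_mul_eq_mul_div]
end

section
/- Let a ∈ (1,2] and let h : [0,∞) → [0,∞) satisfy h(s) = 1 for s ∈ [0,1] and h(s) = 0 for s ≥ a. For an integer K ≥ 1 set K̄ = max(⌈aK⌉ − 1, K), G_K(s,r) = Σ_{k=0}^{K̄} h(k/K) · T_k(s) · T_k(r) / γ_k², κ_Q = ⌈(K̄ + K − 1)/2⌉, nodes r_j = cos((2j+1)π/(2(κ_Q+1))) for j = 0,…,κ_Q, weights w_j = π/(κ_Q+1), and R_K f(r) = Σ_{j=0}^{κ_Q} w_j f(r_j) G_K(r_j, r). Then for every real polynomial p of degree at most K and every r ∈ [−1,1], R_K p(r) = p(r). -/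
/-! Writing `Q` for the Gauss–Chebyshev rule with the `κ_Q + 1` nodes `r_j`, one has
`R_K f (r) = Σ_{k ≤ K̄} h(k/K) T_k(r) Q(f T_k) / γ_k²`, which is linear in `f`, so it suffices
to take `f = T_l` with `l ≤ K`. As `l + k ≤ K + K̄ ≤ 2κ_Q + 1`, the rule integrates `T_l T_k`
exactly against `(1 - x²)^{-1/2}`, and orthogonality leaves only the term `k = l`, whose
filter factor `h(l/K)` is `1`. -/

noncomputable section

open Real Set Finset

/-- Normalizing constants for the Chebyshev polynomials: `γ_0² = π`, `γ_k² = π/2`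
for `k ≥ 1`. -/
def gammaSq (k : ℕ) : ℝ := if k = 0 then π else π / 2

/-- `K̄ = max(⌈aK⌉ − 1, K)`. -/
def Kbar (a : ℝ) (K : ℕ) : ℕ := max ((⌈a * (K : ℝ)⌉).toNat - 1) K

/-- The filtered Chebyshev kernel
`G_K(s,r) = Σ_{k=0}^{K̄} h(k/K) T_k(s) T_k(r) / γ_k²`. -/
def filteredKernel (h : ℝ → ℝ) (a : ℝ) (K : ℕ) (s r : ℝ) : ℝ :=
  ∑ k ∈ range (Kbar a K + 1),
    h ((k : ℝ) / (K : ℝ)) * (Polynomial.Chebyshev.T ℝ (k : ℤ)).eval s *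
      (Polynomial.Chebyshev.T ℝ (k : ℤ)).eval r / gammaSq k

/-- `κ_Q = ⌈(K̄ + K − 1)/2⌉` (for `K ≥ 1` this equals `(K̄ + K)/2` in natural
division). -/
def kappaQ (a : ℝ) (K : ℕ) : ℕ := (Kbar a K + K - 1 + 1) / 2

/-- The Gauss–Chebyshev nodes `r_j = cos((2j+1)π/(2(κ_Q+1)))`,
the zeros of `T_{κ_Q+1}`. -/
def chebNode (a : ℝ) (K : ℕ) (j : ℕ) : ℝ :=
  Real.cos ((2 * (j : ℝ) + 1) * π / (2 * ((kappaQ a K : ℝ) + 1)))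

/-- The filtered hyperinterpolation operator
`R_K f (r) = Σ_{j=0}^{κ_Q} w_j f(r_j) G_K(r_j, r)` with
weights `w_j = π/(κ_Q+1)`. -/
def filteredHyper (h : ℝ → ℝ) (a : ℝ) (K : ℕ) (f : ℝ → ℝ) (r : ℝ) : ℝ :=
  ∑ j ∈ range (kappaQ a K + 1),
    (π / ((kappaQ a K : ℝ) + 1)) * f (chebNode a K j) *
      filteredKernel h a K (chebNode a K j) r

namespace Polynomial.Chebyshev

theorem integral_eval_T_real_mul_eval_T_real_measureT_natCast (k l : ℕ) :
    ∫ x, (T ℝ k).eval x * (T ℝ l).eval x ∂measureT = if k = l then gammaSq k else 0 := by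
  by_cases hkl : k = l
  · subst hkl
    by_cases hk : k = 0
    · subst hk
      simpa [gammaSq] using integral_eval_T_real_mul_self_measureT_zero
    · simpa [gammaSq, hk] using integral_T_real_mul_self_measureT_of_ne_zero hk
  · simpa [hkl] using integral_eval_T_real_mul_eval_T_real_measureT_of_ne hkl

theorem sumZeroes_T_mul_T {n k l : ℕ} (hkl : k + l < 2 * n) :
    sumZeroes n (T ℝ k * T ℝ l) = if k = l then gammaSq k else 0 := by
  have hdeg : (T ℝ k * T ℝ l).degree < 2 * n := by
    rw [degree_mul, degree_T, degree_T]
    exact_mod_cast hkl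
  rw [← integral_eq_sumZeroes (by omega) hdeg]
  simpa using integral_eval_T_real_mul_eval_T_real_measureT_natCast k l

end Polynomial.Chebyshev

open Polynomial Polynomial.Chebyshev

theorem Kbar_add_le (a : ℝ) (K : ℕ) : Kbar a K + K ≤ 2 * kappaQ a K + 1 := by
  unfold kappaQ
  omega

theorem chebNode_eq_cos (a : ℝ) (K j : ℕ) :
    chebNode a K j = cos ((2 * j + 1) / (2 * ((kappaQ a K + 1 : ℕ) : ℝ)) * π) := by
  rw [chebNode]
  push_cast
  ring_nf

theorem filteredHyper_eval_eq_sum_sumZeroes (h : ℝ → ℝ) (a : ℝ) (K : ℕ) (P : ℝ[X]) (r : ℝ) :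
    filteredHyper h a K (fun s => P.eval s) r =
      ∑ k ∈ range (Kbar a K + 1), h (k / K) * (T ℝ k).eval r / gammaSq k *
        sumZeroes (kappaQ a K + 1) (P * T ℝ k) := by
  simp only [filteredHyper, filteredKernel, sumZeroes, chebNode_eq_cos, eval_mul, mul_sum]
  rw [sum_comm]
  refine sum_congr rfl fun k _ => sum_congr rfl fun j _ => ?_
  push_cast
  ring

theorem filteredHyper_eval_T (h : ℝ → ℝ) (h_one : ∀ s ∈ Icc (0 : ℝ) 1, h s = 1)
    (a : ℝ) {K l : ℕ} (hl : l ≤ K) (r : ℝ) :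
    filteredHyper h a K (fun s => (T ℝ l).eval s) r = (T ℝ l).eval r := by
  have hlK : l < Kbar a K + 1 := Nat.lt_succ_of_le (hl.trans (le_max_right _ _))
  have hfilter : h (l / K) = 1 :=
    h_one _ ⟨by positivity, div_le_one_of_le₀ (by exact_mod_cast hl) (by positivity)⟩
  have hexact : ∀ k ∈ range (Kbar a K + 1), l + k < 2 * (kappaQ a K + 1) := fun k hk => by
    have := Kbar_add_le a K
    rw [Finset.mem_range] at hk
    omega
  rw [filteredHyper_eval_eq_sum_sumZeroes,
    sum_congr rfl fun k hk => by rw [sumZeroes_T_mul_T (hexact k hk)]]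
  simp only [mul_ite, mul_zero, sum_ite_eq, Finset.mem_range, hlK, if_true, hfilter]
  have : gammaSq l ≠ 0 := by unfold gammaSq; split_ifs <;> positivity
  field_simp

theorem filteredHyper_add (h : ℝ → ℝ) (a : ℝ) (K : ℕ) (f g : ℝ → ℝ) (r : ℝ) :
    filteredHyper h a K (fun s => f s + g s) r =
      filteredHyper h a K f r + filteredHyper h a K g r := by
  simp only [filteredHyper, ← sum_add_distrib]
  exact sum_congr rfl fun _ _ => by ring

theorem filteredHyper_const_mul (h : ℝ → ℝ) (a : ℝ) (K : ℕ) (c : ℝ) (f : ℝ → ℝ) (r : ℝ) :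
    filteredHyper h a K (fun s => c * f s) r = c * filteredHyper h a K f r := by
  simp only [filteredHyper, mul_sum]
  exact sum_congr rfl fun _ _ => by ring

def filteredHyperEvalₗ (h : ℝ → ℝ) (a : ℝ) (K : ℕ) (r : ℝ) : ℝ[X] →ₗ[ℝ] ℝ where
  toFun P := filteredHyper h a K (fun s => P.eval s) r
  map_add' P Q := by simpa only [eval_add] using filteredHyper_add h a K (P.eval ·) (Q.eval ·) r
  map_smul' c P := by
    simpa only [eval_smul, smul_eq_mul, RingHom.id_apply] using
      filteredHyper_const_mul h a K c (P.eval ·) r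

theorem filteredHyper_reproduces_polynomials_general
    (a : ℝ)
    (h : ℝ → ℝ)
    (h_one : ∀ s ∈ Icc (0 : ℝ) 1, h s = 1)
    (K : ℕ)
    (p : Polynomial ℝ) (hp : p.degree ≤ K) :
    ∀ r ∈ Icc (-1 : ℝ) 1,
      filteredHyper h a K (fun s => p.eval s) r = p.eval r := by
  intro r _
  have hspan : p ∈ Submodule.span ℝ (chebyshevTsequence ℝ '' Set.Iic K) := by
    rw [Sequence.span_degreeLE _ fun i _ => by simp [chebyshevTsequence]]
    exact mem_degreeLE.mpr hp
  refine LinearMap.eqOn_span (f := filteredHyperEvalₗ h a K r) (g := leval r) ?_ hspan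
  rintro _ ⟨l, hl, rfl⟩
  exact filteredHyper_eval_T h h_one a hl r

/-- Filtered hyperinterpolation reproduces polynomials of degree at most `K`:
for a filter `h` equal to `1` on `[0,1]` and vanishing on `[a,∞)`,
`R_K p (r) = p(r)` for every polynomial `p` of degree at most `K` and every
`r ∈ [−1,1]`. -/
theorem filteredHyper_reproduces_polynomials
    (a : ℝ) (ha : a ∈ Ioc (1 : ℝ) 2)
    (h : ℝ → ℝ)
    (h_nonneg : ∀ s : ℝ, 0 ≤ s → 0 ≤ h s)
    (h_one : ∀ s ∈ Icc (0 : ℝ) 1, h s = 1)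
    (h_zero : ∀ s : ℝ, a ≤ s → h s = 0)
    (K : ℕ) (hK : 1 ≤ K)
    (p : Polynomial ℝ) (hp : p.degree ≤ K) :
    ∀ r ∈ Icc (-1 : ℝ) 1,
      filteredHyper h a K (fun s => p.eval s) r = p.eval r :=
  filteredHyper_reproduces_polynomials_general a h h_one K p hp
end
end
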